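/- Let R be a polynomial ring over a field. If J ⊆ I are two ideals of R with height(J) = height(I), then J^unm ⊆ I^unm. Moreover, every primary component of I of minimal height contains the primary component of J belonging to the same associated prime. -/

import Mathlib

open Filter

universe u

section Preamble

variable (R : Type u) [CommRing R]

/-- `PdLE R n M` : the projective dimension of the `R`-module `M` is at most `n`,
defined recursively via canonical syzygies (kernels of canonical free covers). -/
def PdLE : (n : ℕ) → (M : Type u) → [AddCommGroup M] → [Module R M] → Prop
  | 0, M, _, _ => Module.Projective R M
  | n + 1, M, _, _ =>
      PdLE n ↥(LinearMap.ker (Finsupp.linearCombination R (_root_.id : M → M)))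

/-- The projective dimension of an `R`-module `M`, as an extended natural number
(`⊤` if no finite projective resolution exists). -/
noncomputable def projDim (M : Type u) [AddCommGroup M] [Module R M] : ℕ∞ :=
  sInf {n : ℕ∞ | ∃ m : ℕ, n = (m : ℕ∞) ∧ PdLE R m M}

variable {R}

/-- The height of an ideal: the infimum of the heights (in the prime spectrum)
of the minimal primes over it. -/
noncomputable def idealHeight (J : Ideal R) : ℕ∞ :=
  ⨅ (P : Ideal R) (h : P ∈ J.minimalPrimes),
    Order.height (⟨P, h.1.1⟩ : PrimeSpectrum R)

/-- The `P`-primary component of `J` for a minimal prime `P` of `J`,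
i.e. the saturation `{x | ∃ s ∉ P, s * x ∈ J}`. -/
noncomputable def primaryComponent (J P : Ideal R) : Ideal R :=
  ⨆ (s : R) (_ : s ∉ P), Submodule.colon J (Ideal.span {s})

/-- The unmixed part `J^unm` of an ideal `J`: the intersection of the primary
components of `J` of minimal height. -/
noncomputable def unmixedPart (J : Ideal R) : Ideal R :=
  ⨅ (P : Ideal R) (_ : P ∈ J.minimalPrimes ∧ idealHeight P = idealHeight J),
    primaryComponent J P

/-- An ideal is unmixed if all its associated primes have height equal to its height. -/
def IsUnmixed (J : Ideal R) : Prop :=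
  ∀ P ∈ associatedPrimes R (R ⧸ J), idealHeight P = idealHeight J

/-- The depth of a ring: the supremum of lengths of regular sequences contained in the
Jacobson radical (for a local ring, in the maximal ideal). -/
noncomputable def ringDepth (S : Type u) [CommRing S] : ℕ∞ :=
  sSup {d : ℕ∞ | ∃ rs : List S, (rs.length : ℕ∞) = d ∧
    (∀ r ∈ rs, r ∈ (⊥ : Ideal S).jacobson) ∧ RingTheory.Sequence.IsRegular S rs}

/-- A (local) ring is Cohen–Macaulay if its depth equals its Krull dimension. -/
def IsCohenMacaulayLocal (S : Type u) [CommRing S] : Prop :=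
  (ringDepth S : WithBot ℕ∞) = ringKrullDim S

/-- A ring is Cohen–Macaulay if all its localizations at maximal ideals are
Cohen–Macaulay local rings. -/
def IsCohenMacaulayRing (S : Type u) [CommRing S] : Prop :=
  ∀ (P : Ideal S) (hP : P.IsMaximal),
    haveI := hP.isPrime
    IsCohenMacaulayLocal (Localization.AtPrime P)

/-- A Noetherian local ring is Gorenstein iff it is Cohen–Macaulay and some system of
parameters (equivalently, some maximal regular sequence in the maximal ideal) generates
an irreducible ideal. -/
def IsGorensteinLocal (S : Type u) [CommRing S] : Prop :=
  IsNoetherianRing S ∧ IsCohenMacaulayLocal S ∧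
    ∃ rs : List S, (∀ r ∈ rs, r ∈ (⊥ : Ideal S).jacobson) ∧
      RingTheory.Sequence.IsRegular S rs ∧
      ((rs.length : ℕ∞) : WithBot ℕ∞) = ringKrullDim S ∧
      ∀ I₁ I₂ : Ideal S, I₁ ⊓ I₂ = Ideal.ofList rs →
        I₁ = Ideal.ofList rs ∨ I₂ = Ideal.ofList rs

/-- A ring is Gorenstein if it is Noetherian and all its localizations at maximal ideals
are Gorenstein local rings. -/
def IsGorensteinRing (S : Type u) [CommRing S] : Prop :=
  IsNoetherianRing S ∧ ∀ (P : Ideal S) (hP : P.IsMaximal),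
    haveI := hP.isPrime
    IsGorensteinLocal (Localization.AtPrime P)

/-- A ring is regular local iff it is Noetherian, local, and its maximal ideal
(= Jacobson radical) is generated by a regular sequence. -/
def IsRegularLocal (S : Type u) [CommRing S] : Prop :=
  IsNoetherianRing S ∧ IsLocalRing S ∧
    ∃ rs : List S, RingTheory.Sequence.IsRegular S rs ∧
      Ideal.ofList rs = (⊥ : Ideal S).jacobson

/-- The length of a module (as a natural number; `0` when the length is infinite),
defined as the Krull dimension of its lattice of submodules. -/
noncomputable def lengthNat (M : Type u) [AddCommGroup M] [Module R M] : ℕ :=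
  ENat.toNat (WithBot.unbotD 0 (Order.krullDim (Submodule R M)))

/-- The Krull dimension of a ring, as a natural number. -/
noncomputable def ringDimNat (S : Type u) [CommRing S] : ℕ :=
  ENat.toNat (WithBot.unbotD 0 (ringKrullDim S))

variable (R) in
/-- The Hilbert–Samuel multiplicity `e(R/J)` of `R/J` at the ideal `m`:
with `d = dim R/J`, the limit of `d! · λ(R/(J + mⁿ))/nᵈ`. -/
noncomputable def hsMult (m J : Ideal R) : ENNReal :=
  Filter.limsup
    (fun N : ℕ =>
      (((ringDimNat (R ⧸ J)).factorial * lengthNat (R := R) (R ⧸ (J ⊔ m ^ N)) : ℕ) : ENNReal)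
        / (N : ENNReal) ^ (ringDimNat (R ⧸ J)))
    Filter.atTop

end Preamble

section Poly

variable (k : Type u) [Field k] (n : ℕ)

/-- The homogeneous maximal ideal `(X_1, …, X_n)` of `k[X_1, …, X_n]`. -/
noncomputable def maxIdealMv : Ideal (MvPolynomial (Fin n) k) :=
  Ideal.span (Set.range MvPolynomial.X)

variable {k n} in
/-- The multiplicity of `R/J` at the homogeneous maximal ideal. -/
noncomputable def multMv (J : Ideal (MvPolynomial (Fin n) k)) : ENNReal :=
  hsMult (MvPolynomial (Fin n) k) (maxIdealMv k n) J

end Poly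


variable {k : Type u} [Field k] {n : ℕ}

local notation "R" => MvPolynomial (Fin n) k

section Aux

open MvPolynomial

lemma aux_aeval_finSuccEquiv {A : Type*} [CommRing A] [Algebra k A] {m : ℕ}
    (x : Fin (m + 1) → A) (f : MvPolynomial (Fin (m + 1)) k) :
    aeval x f = Polynomial.eval₂
      (↑(aeval (Fin.tail x) : MvPolynomial (Fin m) k →ₐ[k] A) : MvPolynomial (Fin m) k →+* A)
      (x 0) (finSuccEquiv k m f) := by
  have h : (↑(aeval x : MvPolynomial (Fin (m+1)) k →ₐ[k] A) : MvPolynomial (Fin (m+1)) k →+* A) =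
      (Polynomial.eval₂RingHom
        (↑(aeval (Fin.tail x) : MvPolynomial (Fin m) k →ₐ[k] A) : MvPolynomial (Fin m) k →+* A)
        (x 0)).comp
        (↑(finSuccEquiv k m) : MvPolynomial (Fin (m+1)) k →+* Polynomial (MvPolynomial (Fin m) k)) := by
    apply ringHom_ext
    · intro a
      have hCa : finSuccEquiv k m (C a) = Polynomial.C (C a) := by
        simp [finSuccEquiv_apply]
      simp [hCa]
    · intro i
      refine Fin.cases ?_ ?_ i
      · simp [finSuccEquiv_X_zero]
      · intro j
        simp [finSuccEquiv_X_succ, Fin.tail]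
  exact RingHom.congr_fun h f

lemma aux_keyChain {A : Type*} [CommRing A] [Algebra k A] :
    ∀ (m : ℕ) (q : Fin (m + 1) → Ideal A), (∀ j, (q j).IsPrime) →
      (∀ j : Fin m, q j.castSucc ≤ q j.succ) →
      ∀ (x : Fin m → A), (∀ j, x j ∈ q j.succ) → (∀ j, x j ∉ q j.castSucc) →
      ∀ p : MvPolynomial (Fin m) k, p ≠ 0 → aeval x p ∈ q 0 → False := by
  intro m
  induction m with
  | zero =>
    intro q hq _ x _ _ p hp h0
    rw [eq_C_of_isEmpty p] at h0 hp
    rw [aeval_C] at h0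
    have hc : p.coeff 0 ≠ 0 := by
      intro h; exact hp (by rw [h, map_zero])
    have hu : IsUnit (algebraMap k A (p.coeff 0)) :=
      (isUnit_iff_ne_zero.mpr hc).map (algebraMap k A)
    exact (hq 0).ne_top (Ideal.eq_top_of_isUnit_mem _ h0 hu)
  | succ m ih =>
    intro q hq hmono x hx1 hx2 p hp h0
    set P := finSuccEquiv k m p with hPdef
    have hP : P ≠ 0 := by
      intro h
      exact hp ((finSuccEquiv k m).injective (by rw [map_zero, ← hPdef]; exact h))
    set t := P.natTrailingDegree with ht
    obtain ⟨Q, hQ⟩ : Polynomial.X ^ t ∣ P :=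
      Polynomial.X_pow_dvd_iff.mpr fun d hd =>
        Polynomial.coeff_eq_zero_of_lt_natTrailingDegree hd
    have hQ0 : Q.coeff 0 ≠ 0 := by
      have h1 : P.coeff t = Q.coeff 0 := by
        rw [hQ]
        simpa using Polynomial.coeff_X_pow_mul Q t 0
      have h2 : P.coeff t ≠ 0 := by
        rw [ht]
        exact fun h => hP (Polynomial.trailingCoeff_eq_zero.mp h)
      rw [← h1]; exact h2
    -- rewrite h0
    rw [aux_aeval_finSuccEquiv, ← hPdef, hQ, Polynomial.eval₂_mul, Polynomial.eval₂_X_pow] at h0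
    have hx00 : x 0 ∉ q 0 := by
      have := hx2 0
      rwa [Fin.castSucc_zero] at this
    set f : MvPolynomial (Fin m) k →+* A :=
      (↑(aeval (Fin.tail x) : MvPolynomial (Fin m) k →ₐ[k] A) : MvPolynomial (Fin m) k →+* A)
      with hf
    have hE : Polynomial.eval₂ f (x 0) Q ∈ q 0 := by
      rcases (hq 0).mem_or_mem h0 with h | h
      · exact absurd ((hq 0).mem_of_pow_mem _ h) hx00
      · exact h
    have hq01 : q 0 ≤ q 1 := by
      have := hmono 0
      rwa [Fin.castSucc_zero, Fin.succ_zero_eq_one] at this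
    have hx01 : x 0 ∈ q 1 := by
      have := hx1 0
      rwa [Fin.succ_zero_eq_one] at this
    have hsplit : f (Q.coeff 0) ∈ q 1 := by
      have hdecomp : Polynomial.eval₂ f (x 0) Q =
          x 0 * Polynomial.eval₂ f (x 0) Q.divX + f (Q.coeff 0) := by
        conv_lhs => rw [← Polynomial.X_mul_divX_add Q]
        rw [Polynomial.eval₂_add, Polynomial.eval₂_mul, Polynomial.eval₂_X,
          Polynomial.eval₂_C]
      have h1 : x 0 * Polynomial.eval₂ f (x 0) Q.divX ∈ q 1 :=
        Ideal.mul_mem_right _ _ hx01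
      have h2 : Polynomial.eval₂ f (x 0) Q ∈ q 1 := hq01 hE
      have := (q 1).sub_mem h2 h1
      rwa [hdecomp, add_sub_cancel_left] at this
    refine ih (fun j => q j.succ) (fun j => hq j.succ) ?_ (Fin.tail x) ?_ ?_ (Q.coeff 0) hQ0 ?_
    · intro j
      have := hmono j.succ
      rwa [← Fin.succ_castSucc] at this
    · intro j
      exact hx1 j.succ
    · intro j
      have := hx2 j.succ
      rwa [← Fin.succ_castSucc] at this
    · show f (Q.coeff 0) ∈ q ((0 : Fin (m + 1)).succ)
      rw [Fin.succ_zero_eq_one]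
      exact hsplit


lemma aux_single_le_sum {σ : Type*} (s : σ →₀ ℕ) (i : σ) : s i ≤ s.sum fun _ e => e := by
  classical
  by_cases h : i ∈ s.support
  · exact Finset.single_le_sum (f := fun j => s j) (fun _ _ => Nat.zero_le _) h
  · simp [Finsupp.notMem_support_iff.mp h]

lemma aux_notAI {n : ℕ} (x : Fin (n + 1) → MvPolynomial (Fin n) k) :
    ¬ AlgebraicIndependent k x := by
  intro hx
  classical
  set D := (Finset.univ.sup fun i => (x i).totalDegree) + 1 with hD
  set C := (n + 1) * D + 1 with hC
  set d := C ^ n with hd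
  set M := (n + 1) * (d * D) with hM
  let ι := Fin (n + 1) → Fin (d + 1)
  let α : ι → (Fin (n + 1) →₀ ℕ) := fun g => Finsupp.equivFunOnFinite.symm (fun i => (g i : ℕ))
  have hαinj : Function.Injective α := by
    intro g1 g2 h
    funext i
    have h2 := congrArg (fun s : Fin (n + 1) →₀ ℕ => s i) h
    simp only [α, Finsupp.coe_equivFunOnFinite_symm] at h2
    exact Fin.ext h2
  have hα : ∀ (g : ι) (i), α g i = (g i : ℕ) := fun g i => rfl
  let mono : (Fin (n + 1) →₀ ℕ) → MvPolynomial (Fin (n + 1)) k := fun s => monomial s (1 : k)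
  let v : ι → MvPolynomial (Fin n) k := ⇑(aeval x).toLinearMap ∘ mono ∘ α
  have hli : LinearIndependent k v := by
    have h1 : LinearIndependent k mono := by
      have := (basisMonomials (Fin (n + 1)) k).linearIndependent
      rwa [coe_basisMonomials] at this
    have h2 := h1.comp α hαinj
    exact h2.map' (aeval x).toLinearMap (LinearMap.ker_eq_bot.mpr hx)
  set V := restrictTotalDegree (Fin n) k M with hV
  have hdeg : ∀ g : ι, v g ∈ V := by
    intro g
    rw [hV, mem_restrictTotalDegree]
    have hvg : v g = ∏ a : Fin (n + 1), x a ^ (α g) a := by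
      show (aeval x) (monomial (α g) (1 : k)) = _
      rw [aeval_monomial, map_one, one_mul]
      exact Finsupp.prod_fintype _ _ fun i => pow_zero _
    rw [hvg]
    refine le_trans (totalDegree_finset_prod _ _) ?_
    have hstep : ∀ i ∈ Finset.univ (α := Fin (n + 1)),
        ((x i) ^ ((α g) i)).totalDegree ≤ d * D := by
      intro i _
      refine le_trans (totalDegree_pow _ _) (Nat.mul_le_mul ?_ ?_)
      · rw [hα]; exact Nat.lt_succ_iff.mp (g i).isLt
      · have hle : (x i).totalDegree ≤ Finset.univ.sup (fun j => (x j).totalDegree) :=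
          Finset.le_sup (f := fun j => (x j).totalDegree) (Finset.mem_univ i)
        rw [hD]
        omega
    calc ∑ i : Fin (n + 1), ((x i) ^ ((α g) i)).totalDegree
        ≤ ∑ _i : Fin (n + 1), d * D := Finset.sum_le_sum hstep
      _ = (n + 1) * (d * D) := by simp [Finset.sum_const, Finset.card_univ]
  let w : ι → V := fun g => ⟨v g, hdeg g⟩
  have hliw : LinearIndependent k w := LinearIndependent.of_comp V.subtype hli
  haveI : Module.Finite k V := by
    rw [hV]; infer_instance
  have hcard1 : Fintype.card ι ≤ Module.finrank k V := hliw.fintype_card_le_finrank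
  -- bound the finrank
  set S : Set (Fin n →₀ ℕ) := {s | (s.sum fun _ e => e) ≤ M} with hS
  let β : S → (Fin n → Fin (M + 1)) := fun s i =>
    ⟨s.1 i, Nat.lt_succ_of_le (le_trans (aux_single_le_sum s.1 i) s.2)⟩
  have hβinj : Function.Injective β := by
    intro s1 s2 h
    ext i
    have := congrFun h i
    simpa [β] using congrArg Fin.val this
  haveI : Finite ↥S := Finite.of_injective β hβinj
  haveI : Fintype ↥S := Fintype.ofFinite _
  have hfr : Module.finrank k V = Fintype.card S :=
    Module.finrank_eq_card_basis (basisRestrictSupport k S)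
  have hcard2 : Fintype.card ↥S ≤ (M + 1) ^ n := by
    calc Fintype.card ↥S ≤ Fintype.card (Fin n → Fin (M + 1)) :=
          Fintype.card_le_of_injective β hβinj
      _ = (M + 1) ^ n := by simp
  have hcardι : Fintype.card ι = (d + 1) ^ (n + 1) := by simp [ι]
  -- numeric contradiction
  have hkey : (d + 1) ^ (n + 1) ≤ (M + 1) ^ n := by
    rw [← hcardι]
    exact le_trans hcard1 (by rw [hfr]; exact hcard2)
  have hMC : M + 1 ≤ C * (d + 1) := by
    rw [hM, hC]
    nlinarith [Nat.zero_le d, Nat.zero_le D]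
  have hlt : (M + 1) ^ n < (d + 1) ^ (n + 1) := by
    calc (M + 1) ^ n ≤ (C * (d + 1)) ^ n := Nat.pow_le_pow_left hMC n
      _ = C ^ n * (d + 1) ^ n := mul_pow _ _ _
      _ = d * (d + 1) ^ n := by rw [hd]
      _ < (d + 1) * (d + 1) ^ n := by
          have : 0 < (d + 1) ^ n := Nat.pow_pos (Nat.succ_pos d)
          exact Nat.mul_lt_mul_of_lt_of_le (Nat.lt_succ_self d) le_rfl this
      _ = (d + 1) ^ (n + 1) := by ring
  exact absurd hkey (Nat.not_le.mpr hlt)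

lemma aux_ltSeries_length_le {n : ℕ}
    (c : LTSeries (PrimeSpectrum (MvPolynomial (Fin n) k))) : c.length ≤ n := by
  by_contra hcon
  push_neg at hcon
  have hlen : n + 1 ≤ c.length := hcon
  let emb : Fin (n + 2) → Fin (c.length + 1) := fun j => ⟨j, by omega⟩
  let q : Fin (n + 2) → Ideal (MvPolynomial (Fin n) k) := fun j => (c (emb j)).asIdeal
  have hq : ∀ j, (q j).IsPrime := fun j => (c (emb j)).2
  have hlt : ∀ j : Fin (n + 1), q j.castSucc < q j.succ := by
    intro j
    have h : emb j.castSucc < emb j.succ := by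
      simp only [emb, Fin.mk_lt_mk, Fin.coe_castSucc, Fin.val_succ]
      omega
    exact c.strictMono h
  have hex := fun j : Fin (n + 1) => SetLike.exists_of_lt (hlt j)
  choose x hx1 hx2 using hex
  have hnai := aux_notAI (k := k) x
  rw [algebraicIndependent_iff] at hnai
  push_neg at hnai
  obtain ⟨p, hp0, hpne⟩ := hnai
  exact aux_keyChain (n + 1) q hq (fun j => (hlt j).le) x hx1 hx2 p hpne
    (by rw [hp0]; exact (q 0).zero_mem)

end Aux

/-- If `J ⊆ I` are ideals of the same height, then `J^unm ⊆ I^unm`; moreover every primary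
component of `I` of minimal height contains the primary component of `J` belonging to the
same (associated, in fact minimal) prime. -/
theorem stmt6 (J I : Ideal R) (hJI : J ≤ I) (hht : idealHeight J = idealHeight I) :
    unmixedPart J ≤ unmixedPart I
      ∧ ∀ P : Ideal R, P ∈ I.minimalPrimes → idealHeight P = idealHeight I →
          primaryComponent J P ≤ primaryComponent I P := by
  classical
  have primMono : ∀ P : Ideal R, primaryComponent J P ≤ primaryComponent I P := by
    intro P
    exact iSup₂_mono fun s _ => Submodule.colon_mono hJI le_rfl
  have heightLe : ∀ Q : PrimeSpectrum R, Order.height Q ≤ (n : ℕ∞) := by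
    intro Q
    refine Order.height_le fun p _ => ?_
    exact_mod_cast Nat.cast_le.mpr (aux_ltSeries_length_le p)
  have idealHeight_prime : ∀ (P : Ideal R) (hP : P.IsPrime),
      idealHeight P = Order.height (⟨P, hP⟩ : PrimeSpectrum R) := by
    intro P hP
    haveI := hP
    have hmp : P.minimalPrimes = {P} := Ideal.minimalPrimes_eq_subsingleton_self
    refine le_antisymm ?_ ?_
    · exact iInf₂_le P (by rw [hmp]; exact Set.mem_singleton P)
    · refine le_iInf₂ fun Q hQ => ?_
      have hQP : Q = P := by rwa [hmp, Set.mem_singleton_iff] at hQ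
      subst hQP
      exact le_rfl
  constructor
  · refine le_iInf fun P => le_iInf fun hP => ?_
    obtain ⟨hPmin, hPht⟩ := hP
    have hPprime : P.IsPrime := hPmin.1.1
    obtain ⟨Q, hQmin, hQP⟩ :=
      @Ideal.exists_minimalPrimes_le _ _ J P hPprime (le_trans hJI hPmin.1.2)
    have hQprime : Q.IsPrime := hQmin.1.1
    have h1 : idealHeight J ≤ Order.height (⟨Q, hQprime⟩ : PrimeSpectrum R) :=
      iInf₂_le Q hQmin
    have h2 : Order.height (⟨Q, hQprime⟩ : PrimeSpectrum R)
        ≤ Order.height (⟨P, hPprime⟩ : PrimeSpectrum R) :=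
      Order.height_mono hQP
    have h3 : Order.height (⟨P, hPprime⟩ : PrimeSpectrum R) = idealHeight J := by
      rw [← idealHeight_prime P hPprime, hPht, hht]
    have heq : Order.height (⟨Q, hQprime⟩ : PrimeSpectrum R)
        = Order.height (⟨P, hPprime⟩ : PrimeSpectrum R) :=
      le_antisymm h2 (by rw [h3]; exact h1)
    have hQeqP : Q = P := by
      by_contra hne
      have hptne : (⟨Q, hQprime⟩ : PrimeSpectrum R) ≠ ⟨P, hPprime⟩ := by
        intro h
        exact hne (congrArg PrimeSpectrum.asIdeal h)
      have hplt : (⟨Q, hQprime⟩ : PrimeSpectrum R) < ⟨P, hPprime⟩ :=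
        lt_of_le_of_ne hQP hptne
      have hfin : Order.height (⟨Q, hQprime⟩ : PrimeSpectrum R) < ⊤ :=
        lt_of_le_of_lt (heightLe _) (WithTop.coe_lt_top _)
      exact absurd heq (ne_of_lt (Order.height_strictMono hplt hfin))
    subst hQeqP
    calc unmixedPart J ≤ primaryComponent J Q :=
          iInf₂_le Q ⟨hQmin, by rw [hPht, hht]⟩
      _ ≤ primaryComponent I Q := primMono Q
  · intro P _ _
    exact primMono P
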